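/- Let G be an X–Y normalized graph and let K ≠ N(X) be an important X–Y separator of G. Then K is a compound witness with respect to X, Y in G of rank at most excess(K). -/

import Mathlib

variable {V : Type*}

/-- `K` is an `X`–`Y` separator of `G`: `K` avoids `X ∪ Y` and every walk
from a vertex of `X` to a vertex of `Y` meets `K` (i.e. there is no
`X`–`Y` path in `G \ K`). -/
def IsSeparator (G : SimpleGraph V) (X Y K : Set V) : Prop :=
  K ⊆ (X ∪ Y)ᶜ ∧
  ∀ x ∈ X, ∀ y ∈ Y, ∀ w : G.Walk x y, ∃ v ∈ w.support, v ∈ K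

/-- `NR G A B`: the vertices of `G \ B` that are not reachable from `A` in `G \ B`. -/
def NR (G : SimpleGraph V) (A B : Set V) : Set V :=
  {v | v ∉ B ∧ ¬ ∃ a ∈ A, ∃ w : G.Walk a v, ∀ x ∈ w.support, x ∉ B}

/-- `Reach G A B`: the vertices reachable from `A` in `G \ B`. -/
def Reach (G : SimpleGraph V) (A B : Set V) : Set V :=
  {v | ∃ a ∈ A, ∃ w : G.Walk a v, ∀ x ∈ w.support, x ∉ B}

/-- The order on `X`–`Y` separators: `K1 ≤ K2` iff `NR(G,Y,K1) ⊆ NR(G,Y,K2)`. -/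
def SepLE (G : SimpleGraph V) (Y K1 K2 : Set V) : Prop :=
  NR G Y K1 ⊆ NR G Y K2

/-- The strict order on `X`–`Y` separators. -/
def SepLT (G : SimpleGraph V) (Y K1 K2 : Set V) : Prop :=
  NR G Y K1 ⊆ NR G Y K2 ∧ NR G Y K1 ≠ NR G Y K2

/-- A minimal `X`–`Y` separator: no proper subset is an `X`–`Y` separator. -/
def IsMinimalSeparator (G : SimpleGraph V) (X Y K : Set V) : Prop :=
  IsSeparator G X Y K ∧ ∀ K' ⊂ K, ¬ IsSeparator G X Y K'

/-- An important `X`–`Y` separator: a minimal separator `K` such that there is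
no separator `K'` with `K < K'` and `|K'| ≤ |K|`. -/
def IsImportantSeparator (G : SimpleGraph V) (X Y K : Set V) : Prop :=
  IsMinimalSeparator G X Y K ∧
  ¬ ∃ K', IsSeparator G X Y K' ∧ SepLT G Y K K' ∧ K'.ncard ≤ K.ncard

/-- The minimum size of an `X`–`Y` separator of `G`. -/
noncomputable def minSepSize (G : SimpleGraph V) (X Y : Set V) : ℕ :=
  sInf {n | ∃ K, IsSeparator G X Y K ∧ K.ncard = n}

/-- The excess of a separator: its size minus the minimum separator size. -/
noncomputable def excess (G : SimpleGraph V) (X Y K : Set V) : ℕ :=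
  K.ncard - minSepSize G X Y

/-- The graph `Pr(G,X,Y,K)`: the vertices `NR(G,Y,K) \ X` are deleted (here:
made isolated), and every vertex of `X` is made adjacent to every vertex of `K`. -/
def PrGraph (G : SimpleGraph V) (X Y K : Set V) : SimpleGraph V where
  Adj u v := u ≠ v ∧ u ∉ NR G Y K \ X ∧ v ∉ NR G Y K \ X ∧
    (G.Adj u v ∨ (u ∈ X ∧ v ∈ K) ∨ (u ∈ K ∧ v ∈ X))
  symm := by
    constructor
    rintro u v ⟨h1, h2, h3, h4⟩
    refine ⟨h1.symm, h3, h2, ?_⟩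
    rcases h4 with h | h | h
    · exact Or.inl h.symm
    · exact Or.inr (Or.inr ⟨h.2, h.1⟩)
    · exact Or.inr (Or.inl ⟨h.2, h.1⟩)
  loopless := by constructor; rintro v ⟨h1, -⟩; exact h1 rfl

/-- `NSet G X` is `N(X)`: the set of vertices outside `X` adjacent to a vertex of `X`. -/
def NSet (G : SimpleGraph V) (X : Set V) : Set V :=
  {v | v ∉ X ∧ ∃ x ∈ X, G.Adj x v}

/-- `G` is `X`–`Y` normalized: `N(X)` is an `X`–`Y` separator and is
the unique smallest `X`–`Y` separator. -/
def Normalized (G : SimpleGraph V) (X Y : Set V) : Prop :=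
  IsSeparator G X Y (NSet G X) ∧
  ∀ K, IsSeparator G X Y K → K ≠ NSet G X → (NSet G X).ncard < K.ncard

/-- The cover excess `CE(S)`: the minimum excess of an `X`–`Y` separator disjoint from `S`. -/
noncomputable def CE (G : SimpleGraph V) (X Y S : Set V) : ℕ :=
  sInf {n | ∃ K, IsSeparator G X Y K ∧ Disjoint K S ∧ excess G X Y K = n}

/-- A witness of `S`: an `X`–`Y` separator disjoint from `S` whose excess equals `CE(S)`. -/
noncomputable def IsWitness (G : SimpleGraph V) (X Y S K : Set V) : Prop :=
  IsSeparator G X Y K ∧ Disjoint K S ∧ excess G X Y K = CE G X Y S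

/-- An important witness of `S`: a witness of `S` that is an important `X`–`Y` separator. -/
noncomputable def IsImportantWitness (G : SimpleGraph V) (X Y S K : Set V) : Prop :=
  IsWitness G X Y S K ∧ IsImportantSeparator G X Y K

/-- Compound witnesses: `K` is a compound witness with attribute `(S1, …, Sr)`
(a list of sets) w.r.t. `X`, `Y` in `G`.  For `r = 1`: `S1 ⊆ N(X)`, no vertex of
`S1` is adjacent to `Y`, and `K` is the (unique) important witness of `S1`.
For `r > 1`: additionally `S2 ∪ … ∪ Sr` is disjoint from `N(X)` and `K` is a
compound witness with attribute `(S2, …, Sr)` w.r.t. `X`, `Y` in `Pr(G,X,Y,K(S1))`. -/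
inductive IsCompoundWitness (X Y : Set V) :
    SimpleGraph V → List (Set V) → Set V → Prop where
  | base (G : SimpleGraph V) (S1 K : Set V) :
      S1.Nonempty → S1 ⊆ NSet G X → (∀ s ∈ S1, ∀ y ∈ Y, ¬ G.Adj s y) →
      IsImportantWitness G X Y S1 K →
      IsCompoundWitness X Y G [S1] K
  | step (G : SimpleGraph V) (S1 : Set V) (rest : List (Set V)) (K K1 : Set V) :
      S1.Nonempty → S1 ⊆ NSet G X → (∀ s ∈ S1, ∀ y ∈ Y, ¬ G.Adj s y) →
      rest ≠ [] → (∀ S ∈ rest, Disjoint S (NSet G X)) →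
      IsImportantWitness G X Y S1 K1 →
      IsCompoundWitness X Y (PrGraph G X Y K1) rest K →
      IsCompoundWitness X Y G (S1 :: rest) K

/-!
Induction on the excess of `K`. Cover excess is submodular on subsets of `N(X)`, by uncrossing
two separators through the regions `NR(Y, ·)` they cut off and the submodularity of
`R ↦ |N(R)|`. Hence inside `P = N(X) \ K` one can add vertices one at a time, each raising the cover
excess, until it reaches `CE(P)`; this gives `S₁ ⊆ P` with `|S₁| ≤ CE(S₁) = CE(P)`. The witness
`K₁` of `S₁` cutting off the largest region is important, avoids `P` (a witness of `P` is one of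
`S₁`), and lies before `K` (uncross it with `K`, which is important). Either `K₁ = K`, or `K` is an
important separator of `Pr(G,X,Y,K₁)`, a normalized graph with `N(X) = K₁` in which `K` has
excess `|K| - |K₁| < excess K`; prefixing `S₁` to the attribute found there gives rank at most
`CE(S₁) + |K| - |K₁| = excess K`.
-/

open SimpleGraph

section Reach

variable {G : SimpleGraph V} {A B R : Set V} {u v : V}

lemma mem_reach_of_mem (hA : v ∈ A) (hB : v ∉ B) : v ∈ Reach G A B :=
  ⟨v, hA, .nil, by simpa using hB⟩

lemma notMem_of_mem_reach (h : v ∈ Reach G A B) : v ∉ B := by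
  obtain ⟨a, -, w, hw⟩ := h
  exact hw v w.end_mem_support

lemma mem_reach_of_adj (hu : u ∈ Reach G A B) (huv : G.Adj u v) (hv : v ∉ B) :
    v ∈ Reach G A B := by
  obtain ⟨a, ha, w, hw⟩ := hu
  refine ⟨a, ha, w.concat huv, fun x hx => ?_⟩
  rw [Walk.support_concat, List.mem_append, List.mem_singleton] at hx
  rcases hx with hx | rfl
  exacts [hw x hx, hv]

lemma reach_subset_of_closed (hA : ∀ a ∈ A, a ∉ B → a ∈ R)
    (hstep : ∀ u v, u ∈ Reach G A B → u ∈ R → G.Adj u v → v ∉ B → v ∈ R) :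
    Reach G A B ⊆ R := by
  have key : ∀ {x y} (w : G.Walk x y), x ∈ Reach G A B → x ∈ R →
      (∀ z ∈ w.support, z ∉ B) → y ∈ R := by
    intro x y w
    induction w with
    | nil => exact fun _ hx _ => hx
    | @cons x z y hxz p ih =>
      intro hxA hxR hw
      have hz : z ∉ B := hw z (by simp)
      exact ih (mem_reach_of_adj hxA hxz hz) (hstep x z hxA hxR hxz hz)
        fun t ht => hw t (by simp [ht])
  rintro v ⟨a, ha, w, hw⟩
  have haB : a ∉ B := hw a w.start_mem_support
  exact key w (mem_reach_of_mem ha haB) (hA a ha haB) hw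

lemma reach_subset_union_setOf_adj : Reach G A B ⊆ A ∪ {v | ∃ u, G.Adj u v} :=
  reach_subset_of_closed (fun _ ha _ => Or.inl ha) fun u _ _ _ huv _ => Or.inr ⟨u, huv⟩

lemma mem_NR : v ∈ NR G A B ↔ v ∉ B ∧ v ∉ Reach G A B := Iff.rfl

lemma mem_reach_of_notMem_NR (hB : v ∉ B) (h : v ∉ NR G A B) : v ∈ Reach G A B :=
  not_not.1 fun h' => h ⟨hB, h'⟩

lemma not_adj_of_mem_reach_of_mem_NR (hu : u ∈ Reach G A B) (hv : v ∈ NR G A B) :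
    ¬ G.Adj u v :=
  fun huv => hv.2 (mem_reach_of_adj hu huv hv.1)

lemma nset_NR_subset : NSet G (NR G A B) ⊆ B := by
  rintro v ⟨hv, u, hu, huv⟩
  by_contra hvB
  exact not_adj_of_mem_reach_of_mem_NR (mem_reach_of_notMem_NR hvB hv) hu huv.symm

lemma disjoint_NR : Disjoint (NR G A B) B :=
  Set.disjoint_left.2 fun _ hv => hv.1

lemma disjoint_nset_self : Disjoint (NSet G R) R :=
  Set.disjoint_left.2 fun _ hv => hv.1

lemma nonempty_of_mem_nset (hv : v ∈ NSet G A) : A.Nonempty :=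
  let ⟨_, hx, _⟩ := hv.2
  ⟨_, hx⟩

end Reach

section Separator

variable {G : SimpleGraph V} {X Y K J R : Set V} {v : V}

lemma isSeparator_iff_disjoint_reach :
    IsSeparator G X Y K ↔ K ⊆ (X ∪ Y)ᶜ ∧ Disjoint Y (Reach G X K) := by
  simp only [IsSeparator, Reach, Set.disjoint_left, Set.mem_ofPred_eq]
  refine and_congr_right fun _ => ⟨fun h y hy ⟨x, hx, w, hw⟩ => ?_, fun h x hx y hy w => ?_⟩
  · obtain ⟨v, hv, hvK⟩ := h x hx y hy w
    exact hw v hv hvK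
  · by_contra! hw
    exact h hy ⟨x, hx, w, hw⟩

lemma IsSeparator.symm (h : IsSeparator G X Y K) : IsSeparator G Y X K :=
  ⟨Set.union_comm X Y ▸ h.1, fun y hy x hx w => by simpa using h.2 x hx y hy w.reverse⟩

lemma IsSeparator.of_disjoint_reach (hK : K ⊆ (X ∪ Y)ᶜ) (h : Disjoint X (Reach G Y K)) :
    IsSeparator G X Y K :=
  (isSeparator_iff_disjoint_reach.2 ⟨Set.union_comm X Y ▸ hK, h⟩).symm

lemma IsSeparator.disjoint_reach (h : IsSeparator G X Y K) : Disjoint X (Reach G Y K) :=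
  (isSeparator_iff_disjoint_reach.1 h.symm).2

lemma IsSeparator.disjoint_left (h : IsSeparator G X Y K) : Disjoint K X :=
  Set.disjoint_left.2 fun _ hv hX => h.1 hv (Or.inl hX)

lemma IsSeparator.disjoint_right (h : IsSeparator G X Y K) : Disjoint K Y :=
  Set.disjoint_left.2 fun _ hv hY => h.1 hv (Or.inr hY)

lemma IsSeparator.subset_NR (h : IsSeparator G X Y K) : X ⊆ NR G Y K := fun _ hx =>
  ⟨Set.disjoint_right.1 h.disjoint_left hx, Set.disjoint_left.1 h.disjoint_reach hx⟩

lemma IsSeparator.subset_reach (h : IsSeparator G X Y K) : Y ⊆ Reach G Y K := fun _ hy =>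
  mem_reach_of_mem hy (Set.disjoint_right.1 h.disjoint_right hy)

lemma IsSeparator.disjoint_NR (h : IsSeparator G X Y K) : Disjoint Y (NR G Y K) :=
  Set.disjoint_left.2 fun _ hy hv => hv.2 (h.subset_reach hy)

lemma IsSeparator.reach_subset_NR (h : IsSeparator G X Y K) : Reach G X K ⊆ NR G Y K := by
  have hY : Reach G X K ⊆ (Reach G Y K)ᶜ := by
    refine reach_subset_of_closed (fun x hx _ => Set.disjoint_left.1 h.disjoint_reach hx) ?_
    intro u v hu huY huv _ hvY
    exact huY (mem_reach_of_adj hvY huv.symm (notMem_of_mem_reach hu))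
  exact fun v hv => ⟨notMem_of_mem_reach hv, hY hv⟩

lemma IsSeparator.nset_diff_subset_NR (h : IsSeparator G X Y K) : NSet G X \ K ⊆ NR G Y K := by
  rintro v ⟨⟨hvX, x, hx, hxv⟩, hvK⟩
  by_contra hv
  exact hvK (nset_NR_subset ⟨hv, x, h.subset_NR hx, hxv⟩)

lemma IsSeparator.nset_diff_subset_reach (hK : IsSeparator G X Y K) :
    NSet G X \ K ⊆ Reach G X K := by
  rintro s ⟨⟨-, x, hx, hxs⟩, hsK⟩
  exact mem_reach_of_adj (mem_reach_of_mem hx (Set.disjoint_right.1 hK.disjoint_left hx)) hxs hsK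

lemma IsSeparator.not_adj (h : IsSeparator G X Y K) {s y : V} (hs : s ∈ NSet G X \ K)
    (hy : y ∈ Y) : ¬ G.Adj s y :=
  fun hsy => not_adj_of_mem_reach_of_mem_NR (h.subset_reach hy) (h.nset_diff_subset_NR hs) hsy.symm

lemma IsMinimalSeparator.exists_adj_mem_reach (h : IsMinimalSeparator G X Y K) (hv : v ∈ K) :
    ∃ u ∈ Reach G X K, G.Adj u v := by
  by_contra! hno
  refine h.2 (K \ {v}) (Set.sdiff_singleton_ssubset.2 hv) ?_
  refine isSeparator_iff_disjoint_reach.2 ⟨fun u hu => h.1.1 hu.1, ?_⟩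
  refine (isSeparator_iff_disjoint_reach.1 h.1).2.mono_right (reach_subset_of_closed ?_ ?_)
  · exact fun x hx _ => mem_reach_of_mem hx (Set.disjoint_right.1 h.1.disjoint_left hx)
  · rintro u w - hu huw hw
    obtain rfl | hwv := eq_or_ne w v
    · exact absurd huw (hno u hu)
    · exact mem_reach_of_adj hu huw fun hwK => hw ⟨hwK, hwv⟩

lemma IsMinimalSeparator.exists_adj (h : IsMinimalSeparator G X Y K) (hv : v ∈ K) :
    ∃ u, G.Adj v u := by
  obtain ⟨u, -, huv⟩ := h.exists_adj_mem_reach hv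
  exact ⟨u, huv.symm⟩

lemma IsMinimalSeparator.nset_NR_eq (h : IsMinimalSeparator G X Y K) : NSet G (NR G Y K) = K := by
  refine nset_NR_subset.antisymm fun v hv => ⟨fun hvNR => hvNR.1 hv, ?_⟩
  obtain ⟨u, hu, huv⟩ := h.exists_adj_mem_reach hv
  exact ⟨u, h.1.reach_subset_NR hu, huv⟩

lemma IsMinimalSeparator.subset_of_NR_eq (h : IsMinimalSeparator G X Y K)
    (hNR : NR G Y K = NR G Y J) : K ⊆ J :=
  h.nset_NR_eq ▸ hNR ▸ nset_NR_subset

lemma IsMinimalSeparator.eq_of_NR_eq (hK : IsMinimalSeparator G X Y K)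
    (hJ : IsMinimalSeparator G X Y J) (hNR : NR G Y K = NR G Y J) : K = J :=
  (hK.subset_of_NR_eq hNR).antisymm (hJ.subset_of_NR_eq hNR.symm)

lemma exists_isMinimalSeparator_subset [Finite V] (h : IsSeparator G X Y K) :
    ∃ J ⊆ K, IsMinimalSeparator G X Y J := by
  obtain ⟨J, hJK, hJ, hmin⟩ := exists_minimal_le_of_wellFoundedLT (IsSeparator G X Y) K h
  exact ⟨J, hJK, hJ, fun J' hJ' hsep => hJ'.2 (hmin hsep hJ'.1)⟩

lemma isSeparator_nset (hXR : X ⊆ R) (hRY : Disjoint (R ∪ NSet G R) Y) :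
    IsSeparator G X Y (NSet G R) ∧ R ⊆ NR G Y (NSet G R) := by
  have hreach : Disjoint R (Reach G Y (NSet G R)) := by
    refine Set.disjoint_right.2 (reach_subset_of_closed ?_ ?_)
    · exact fun y hy _ hyR => Set.disjoint_right.1 hRY hy (Or.inl hyR)
    · intro u w hu huR huw hw hwR
      exact notMem_of_mem_reach hu ⟨huR, w, hwR, huw.symm⟩
  refine ⟨.of_disjoint_reach ?_ (hreach.mono_left hXR), fun v hv => ?_⟩
  · rintro v hv (hvX | hvY)
    · exact hv.1 (hXR hvX)
    · exact Set.disjoint_right.1 hRY hvY (Or.inr hv)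
  · exact ⟨Set.disjoint_right.1 disjoint_nset_self hv, Set.disjoint_left.1 hreach hv⟩

lemma disjoint_union_nset_of_subset_NR_union (hK : IsSeparator G X Y K) (hJ : IsSeparator G X Y J)
    (hR : R ⊆ NR G Y K ∪ NR G Y J) : Disjoint (R ∪ NSet G R) Y := by
  have hRY : ∀ y ∈ Y, ∀ u ∈ R, u ≠ y ∧ ¬ G.Adj y u := by
    intro y hy u hu
    rcases hR hu with hu | hu
    · exact ⟨fun h => Set.disjoint_left.1 hK.disjoint_NR hy (h ▸ hu),
        not_adj_of_mem_reach_of_mem_NR (hK.subset_reach hy) hu⟩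
    · exact ⟨fun h => Set.disjoint_left.1 hJ.disjoint_NR hy (h ▸ hu),
        not_adj_of_mem_reach_of_mem_NR (hJ.subset_reach hy) hu⟩
  refine Set.disjoint_right.2 fun y hy => ?_
  rintro (hyR | ⟨-, u, hu, huy⟩)
  exacts [(hRY y hy y hyR).1 rfl, (hRY y hy u hu).2 huy.symm]

end Separator

section Uncrossing

variable {G : SimpleGraph V} {X Y K J : Set V}

lemma IsSeparator.nset_NR_union (hK : IsSeparator G X Y K) (hJ : IsSeparator G X Y J) :
    IsSeparator G X Y (NSet G (NR G Y K ∪ NR G Y J)) ∧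
      NR G Y K ∪ NR G Y J ⊆ NR G Y (NSet G (NR G Y K ∪ NR G Y J)) :=
  isSeparator_nset (fun _ hx => Or.inl (hK.subset_NR hx))
    (disjoint_union_nset_of_subset_NR_union hK hJ subset_rfl)

lemma IsSeparator.nset_NR_inter (hK : IsSeparator G X Y K) (hJ : IsSeparator G X Y J) :
    IsSeparator G X Y (NSet G (NR G Y K ∩ NR G Y J)) :=
  (isSeparator_nset (R := NR G Y K ∩ NR G Y J)
    (fun _ hx => ⟨hK.subset_NR hx, hJ.subset_NR hx⟩)
    (disjoint_union_nset_of_subset_NR_union hK hJ fun _ hv => Or.inl hv.1)).1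

lemma nset_inter_union_nset_union_subset (R₁ R₂ : Set V) :
    NSet G (R₁ ∩ R₂) ∪ NSet G (R₁ ∪ R₂) ⊆ NSet G R₁ ∪ NSet G R₂ := by
  rintro v (⟨hv, u, ⟨hu₁, hu₂⟩, huv⟩ | ⟨hv, u, hu | hu, huv⟩)
  · by_cases h₁ : v ∈ R₁
    · exact Or.inr ⟨fun h₂ => hv ⟨h₁, h₂⟩, u, hu₂, huv⟩
    · exact Or.inl ⟨h₁, u, hu₁, huv⟩
  · exact Or.inl ⟨fun h => hv (Or.inl h), u, hu, huv⟩
  · exact Or.inr ⟨fun h => hv (Or.inr h), u, hu, huv⟩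

lemma nset_inter_inter_nset_union_subset (R₁ R₂ : Set V) :
    NSet G (R₁ ∩ R₂) ∩ NSet G (R₁ ∪ R₂) ⊆ NSet G R₁ ∩ NSet G R₂ := by
  rintro v ⟨⟨-, u, ⟨hu₁, hu₂⟩, huv⟩, hv, -⟩
  exact ⟨⟨fun h => hv (Or.inl h), u, hu₁, huv⟩,
    ⟨fun h => hv (Or.inr h), u, hu₂, huv⟩⟩

lemma ncard_nset_inter_add_ncard_nset_union_le [Finite V] (R₁ R₂ : Set V) :
    (NSet G (R₁ ∩ R₂)).ncard + (NSet G (R₁ ∪ R₂)).ncard ≤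
      (NSet G R₁).ncard + (NSet G R₂).ncard := by
  have := Set.ncard_union_add_ncard_inter (NSet G (R₁ ∩ R₂)) (NSet G (R₁ ∪ R₂))
  have := Set.ncard_union_add_ncard_inter (NSet G R₁) (NSet G R₂)
  have := Set.ncard_le_ncard (nset_inter_union_nset_union_subset (G := G) R₁ R₂)
  have := Set.ncard_le_ncard (nset_inter_inter_nset_union_subset (G := G) R₁ R₂)
  omega

lemma minSepSize_le (h : IsSeparator G X Y K) : minSepSize G X Y ≤ K.ncard :=
  Nat.sInf_le ⟨K, h, rfl⟩

lemma excess_nset_NR_union_add_excess_nset_NR_inter_le [Finite V] (hK : IsSeparator G X Y K)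
    (hJ : IsSeparator G X Y J) :
    excess G X Y (NSet G (NR G Y K ∪ NR G Y J)) +
        excess G X Y (NSet G (NR G Y K ∩ NR G Y J)) ≤
      excess G X Y K + excess G X Y J := by
  have hsub := ncard_nset_inter_add_ncard_nset_union_le (G := G) (NR G Y K) (NR G Y J)
  have hK' := Set.ncard_le_ncard (nset_NR_subset (G := G) (A := Y) (B := K))
  have hJ' := Set.ncard_le_ncard (nset_NR_subset (G := G) (A := Y) (B := J))
  have hU := minSepSize_le (hK.nset_NR_union hJ).1
  have hI := minSepSize_le (hK.nset_NR_inter hJ)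
  have := minSepSize_le hK
  have := minSepSize_le hJ
  unfold excess
  omega

lemma Normalized.minSepSize_eq (h : Normalized G X Y) : minSepSize G X Y = (NSet G X).ncard := by
  refine (minSepSize_le h.1).antisymm (le_csInf ⟨_, _, h.1, rfl⟩ ?_)
  rintro n ⟨K, hK, rfl⟩
  obtain rfl | hne := eq_or_ne K (NSet G X)
  exacts [le_rfl, (h.2 K hK hne).le]

lemma Normalized.minSepSize_lt (h : Normalized G X Y) (hK : IsSeparator G X Y K)
    (hne : K ≠ NSet G X) : minSepSize G X Y < K.ncard :=
  h.minSepSize_eq ▸ h.2 K hK hne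

end Uncrossing

section CoverExcess

variable {G : SimpleGraph V} {X Y K K₁ J S A B P : Set V}

lemma IsSeparator.subset_NR_of_disjoint (hK : IsSeparator G X Y K) (hS : S ⊆ NSet G X)
    (hKS : Disjoint K S) : S ⊆ NR G Y K :=
  fun _ hs => hK.nset_diff_subset_NR ⟨hS hs, Set.disjoint_right.1 hKS hs⟩

lemma CE_le_excess (hJ : IsSeparator G X Y J) (hJS : Disjoint J S) :
    CE G X Y S ≤ excess G X Y J :=
  Nat.sInf_le ⟨J, hJ, hJS, rfl⟩

lemma exists_isWitness (hJ : IsSeparator G X Y J) (hJS : Disjoint J S) :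
    ∃ K, IsWitness G X Y S K := by
  have hne : {n | ∃ K, IsSeparator G X Y K ∧ Disjoint K S ∧ excess G X Y K = n}.Nonempty :=
    ⟨_, J, hJ, hJS, rfl⟩
  obtain ⟨K, hK, hKS, h⟩ := Nat.sInf_mem hne
  exact ⟨K, hK, hKS, h⟩

lemma IsWitness.of_excess_le (hJ : IsSeparator G X Y J) (hJS : Disjoint J S)
    (h : excess G X Y J ≤ CE G X Y S) : IsWitness G X Y S J :=
  ⟨hJ, hJS, h.antisymm (CE_le_excess hJ hJS)⟩

lemma IsWitness.isMinimalSeparator [Finite V] (h : IsWitness G X Y S K) :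
    IsMinimalSeparator G X Y K := by
  refine ⟨h.1, fun J hJK hJ => ?_⟩
  have := CE_le_excess hJ (h.2.1.mono_left hJK.subset)
  have := Set.ncard_lt_ncard hJK
  have := minSepSize_le hJ
  have := h.2.2
  unfold excess at *
  omega

lemma CE_mono (hAB : A ⊆ B) (hJ : IsSeparator G X Y J) (hJB : Disjoint J B) :
    CE G X Y A ≤ CE G X Y B := by
  obtain ⟨K, hK⟩ := exists_isWitness hJ hJB
  exact hK.2.2 ▸ CE_le_excess hK.1 (hK.2.1.mono_right hAB)

lemma CE_union_add_CE_inter_le [Finite V] (hA : A ⊆ NSet G X) (hB : B ⊆ NSet G X)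
    (hK : IsWitness G X Y A K) (hJ : IsWitness G X Y B J) :
    CE G X Y (A ∪ B) + CE G X Y (A ∩ B) ≤ CE G X Y A + CE G X Y B := by
  have hAR := hK.1.subset_NR_of_disjoint hA hK.2.1
  have hBR := hJ.1.subset_NR_of_disjoint hB hJ.2.1
  have := CE_le_excess (hK.1.nset_NR_union hJ.1).1
    (disjoint_nset_self.mono_right (Set.union_subset_union hAR hBR))
  have := CE_le_excess (hK.1.nset_NR_inter hJ.1)
    (disjoint_nset_self.mono_right (Set.inter_subset_inter hAR hBR))
  have := excess_nset_NR_union_add_excess_nset_NR_inter_le hK.1 hJ.1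
  rw [← hK.2.2, ← hJ.2.2]
  omega

/-- If no single vertex of `P` raises the cover excess of `S`, then by submodularity neither
does all of `P`. -/
lemma exists_CE_lt_CE_insert [Finite V] (hP : P ⊆ NSet G X) (hK : IsSeparator G X Y K)
    (hKP : Disjoint K P) (hS : S ⊆ P) (hlt : CE G X Y S < CE G X Y P) :
    ∃ s ∈ P, CE G X Y S < CE G X Y (insert s S) := by
  by_contra! hle
  have hwit : ∀ T ⊆ P, ∃ J, IsWitness G X Y T J := fun T hT =>
    exists_isWitness hK (hKP.mono_right hT)
  have key : CE G X Y (S ∪ P) ≤ CE G X Y S := by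
    refine Set.Finite.induction_on_subset (motive := fun T _ => CE G X Y (S ∪ T) ≤ CE G X Y S)
      P (Set.toFinite P) (by simp) fun {a T} haP hTP _ ih => ?_
    have hST : S ∪ T ⊆ P := Set.union_subset hS hTP
    have haS : insert a S ⊆ P := Set.insert_subset haP hS
    obtain ⟨J₁, hJ₁⟩ := hwit _ hST
    obtain ⟨J₂, hJ₂⟩ := hwit _ haS
    have hsub := CE_union_add_CE_inter_le (hST.trans hP) (haS.trans hP) hJ₁ hJ₂
    have hunion : S ∪ T ∪ insert a S = S ∪ insert a T := by
      ext; simp only [Set.mem_union, Set.mem_insert_iff]; tauto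
    have hinter : CE G X Y S ≤ CE G X Y ((S ∪ T) ∩ insert a S) :=
      CE_mono (Set.subset_inter Set.subset_union_left (Set.subset_insert a S)) hK
        (hKP.mono_right (Set.inter_subset_left.trans hST))
    have := hle a haP
    rw [hunion] at hsub
    omega
  rw [Set.union_eq_self_of_subset_left hS] at key
  omega

lemma exists_subset_ncard_le_CE_eq [Finite V] (hP : P ⊆ NSet G X) (hK : IsSeparator G X Y K)
    (hKP : Disjoint K P) : ∃ S ⊆ P, S.ncard ≤ CE G X Y S ∧ CE G X Y S = CE G X Y P := by
  obtain ⟨S, ⟨hSP, hS⟩, hmax⟩ :=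
    Set.exists_max_image {S | S ⊆ P ∧ S.ncard ≤ CE G X Y S} (CE G X Y) (Set.toFinite _)
      ⟨∅, Set.empty_subset P, by simp⟩
  refine ⟨S, hSP, hS, (CE_mono hSP hK hKP).antisymm (not_lt.1 fun hlt => ?_)⟩
  obtain ⟨s, hsP, hs⟩ := exists_CE_lt_CE_insert hP hK hKP hSP hlt
  have := hmax (insert s S)
    ⟨Set.insert_subset hsP hSP, (Set.ncard_insert_le s S).trans (by omega)⟩
  omega

lemma IsWitness.nset_NR_union [Finite V] (hS : S ⊆ NSet G X) (hK : IsWitness G X Y S K)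
    (hJ : IsWitness G X Y S J) : IsWitness G X Y S (NSet G (NR G Y K ∪ NR G Y J)) := by
  have hKR := hK.1.subset_NR_of_disjoint hS hK.2.1
  have hJR := hJ.1.subset_NR_of_disjoint hS hJ.2.1
  have := CE_le_excess (hK.1.nset_NR_inter hJ.1)
    (disjoint_nset_self.mono_right (Set.subset_inter hKR hJR))
  have := excess_nset_NR_union_add_excess_nset_NR_inter_le hK.1 hJ.1
  have := hK.2.2
  have := hJ.2.2
  exact .of_excess_le (hK.1.nset_NR_union hJ.1).1
    (disjoint_nset_self.mono_right (hKR.trans Set.subset_union_left)) (by omega)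

lemma exists_greatest_isWitness [Finite V] (hS : S ⊆ NSet G X) (hK : IsSeparator G X Y K)
    (hKS : Disjoint K S) :
    ∃ K₁, IsWitness G X Y S K₁ ∧ ∀ J, IsWitness G X Y S J → SepLE G Y J K₁ := by
  obtain ⟨K₁, hK₁, hmax⟩ := Set.exists_max_image {J | IsWitness G X Y S J}
    (fun J => (NR G Y J).ncard) (Set.toFinite _) (exists_isWitness hK hKS)
  refine ⟨K₁, hK₁, fun J hJ => ?_⟩
  have hsub := (hK₁.1.nset_NR_union hJ.1).2
  have heq := Set.eq_of_subset_of_ncard_le (Set.subset_union_left.trans hsub)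
    (hmax _ (hK₁.nset_NR_union hS hJ))
  exact (Set.subset_union_right.trans hsub).trans heq.symm.subset

lemma IsWitness.isImportantSeparator_of_greatest [Finite V] (hS : S ⊆ NSet G X)
    (hK : IsWitness G X Y S K) (hmax : ∀ J, IsWitness G X Y S J → SepLE G Y J K) :
    IsImportantSeparator G X Y K := by
  refine ⟨hK.isMinimalSeparator,
    fun ⟨J, hJ, hlt, hcard⟩ => hlt.2 (hlt.1.antisymm (hmax J ?_))⟩
  have hJS : Disjoint J S :=
    (disjoint_NR.mono_left ((hK.1.subset_NR_of_disjoint hS hK.2.1).trans hlt.1)).symm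
  have := hK.2.2
  have := minSepSize_le hJ
  exact .of_excess_le hJ hJS (by unfold excess at *; omega)

lemma IsImportantSeparator.sepLE_of_isWitness [Finite V] (hK : IsImportantSeparator G X Y K)
    (hS : S ⊆ NSet G X) (hKS : Disjoint K S) (hK₁ : IsWitness G X Y S K₁) :
    SepLE G Y K₁ K := by
  have hK₁R := hK₁.1.subset_NR_of_disjoint hS hK₁.2.1
  have hKR := hK.1.1.subset_NR_of_disjoint hS hKS
  obtain ⟨hU, hsub⟩ := hK₁.1.nset_NR_union hK.1.1
  have := CE_le_excess (hK₁.1.nset_NR_inter hK.1.1)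
    (disjoint_nset_self.mono_right (Set.subset_inter hK₁R hKR))
  have := excess_nset_NR_union_add_excess_nset_NR_inter_le hK₁.1 hK.1.1
  have := hK₁.2.2
  have := minSepSize_le hU
  have := minSepSize_le hK.1.1
  have hcard : (NSet G (NR G Y K₁ ∪ NR G Y K)).ncard ≤ K.ncard := by unfold excess at *; omega
  by_contra hle
  refine hK.2 ⟨_, hU, ⟨Set.subset_union_right.trans hsub, fun heq => hle ?_⟩, hcard⟩
  exact (Set.subset_union_left.trans hsub).trans heq.symm.subset

lemma disjoint_of_greatest_isWitness (hP : P ⊆ NSet G X) (hSP : S ⊆ P)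
    (hCE : CE G X Y S = CE G X Y P) (hK : IsSeparator G X Y K) (hKP : Disjoint K P)
    (hmax : ∀ J, IsWitness G X Y S J → SepLE G Y J K₁) : Disjoint K₁ P := by
  obtain ⟨J, hJ, hJP, hJe⟩ := exists_isWitness hK hKP
  have hJS : IsWitness G X Y S J := ⟨hJ, hJP.mono_right hSP, hJe.trans hCE.symm⟩
  exact (disjoint_NR.mono_left ((hJ.subset_NR_of_disjoint hP hJP).trans (hmax J hJS))).symm

lemma Normalized.CE_empty (h : Normalized G X Y) : CE G X Y ∅ = 0 := by
  have := CE_le_excess h.1 (Set.disjoint_empty (NSet G X))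
  rwa [excess, h.minSepSize_eq, Nat.sub_self, Nat.le_zero] at this

lemma Normalized.CE_pos (h : Normalized G X Y) (hS : S.Nonempty) (hSN : S ⊆ NSet G X)
    (hK : IsSeparator G X Y K) (hKS : Disjoint K S) : 0 < CE G X Y S := by
  obtain ⟨J, hJ, hJS, hJe⟩ := exists_isWitness hK hKS
  have hne : J ≠ NSet G X := by
    rintro rfl
    obtain ⟨s, hs⟩ := hS
    exact Set.disjoint_left.1 hJS (hSN hs) hs
  have := h.minSepSize_lt hJ hne
  rw [← hJe, excess]
  omega

end CoverExcess

section PrGraph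

variable {G : SimpleGraph V} {X Y K K₁ J S A B : Set V} {u v : V}

lemma prGraph_adj_of_adj (huv : G.Adj u v) (hu : u ∉ NR G Y K₁ \ X)
    (hv : v ∉ NR G Y K₁ \ X) : (PrGraph G X Y K₁).Adj u v :=
  ⟨huv.ne, hu, hv, Or.inl huv⟩

lemma prGraph_adj_of_mem (hu : u ∈ X) (hv : v ∈ K₁ \ X) : (PrGraph G X Y K₁).Adj u v :=
  ⟨fun h => hv.2 (h ▸ hu), fun h => h.2 hu, fun h => h.1.1 hv.1,
    Or.inr (Or.inl ⟨hu, hv.1⟩)⟩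

lemma notMem_NR_diff_of_mem_reach_prGraph (h : v ∈ Reach (PrGraph G X Y K₁) A B)
    (hv : v ∉ A) : v ∉ NR G Y K₁ \ X := by
  obtain hA | ⟨u, huv⟩ := reach_subset_union_setOf_adj h
  exacts [absurd hA hv, huv.2.2.1]

lemma disjoint_reach_prGraph (hX : X.Nonempty) (hK₁ : IsSeparator G X Y K₁)
    (hJ : IsSeparator (PrGraph G X Y K₁) X Y J) :
    Disjoint K₁ (Reach (PrGraph G X Y K₁) Y J) := by
  refine Set.disjoint_left.2 fun k hk hkR => ?_
  obtain ⟨x, hx⟩ := hX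
  refine Set.disjoint_left.1 hJ.disjoint_reach hx (mem_reach_of_adj hkR ?_
    (Set.disjoint_right.1 hJ.disjoint_left hx))
  exact (prGraph_adj_of_mem hx ⟨hk, Set.disjoint_left.1 hK₁.disjoint_left hk⟩).symm

lemma reach_subset_reach_prGraph (hX : X.Nonempty) (hK₁ : IsSeparator G X Y K₁)
    (hJ : IsSeparator (PrGraph G X Y K₁) X Y J) :
    Reach G Y J ⊆ Reach (PrGraph G X Y K₁) Y J := by
  refine reach_subset_of_closed (fun y hy hyJ => mem_reach_of_mem hy hyJ)
    fun u v _ hu huv hvJ => ?_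
  have huX : u ∉ X := fun h => Set.disjoint_left.1 hJ.disjoint_reach h hu
  have huNR : u ∉ NR G Y K₁ := by
    by_cases huY : u ∈ Y
    · exact Set.disjoint_left.1 hK₁.disjoint_NR huY
    · exact fun h => notMem_NR_diff_of_mem_reach_prGraph hu huY ⟨h, huX⟩
  have hvNR : v ∉ NR G Y K₁ := fun hv =>
    Set.disjoint_left.1 (disjoint_reach_prGraph hX hK₁ hJ)
      (nset_NR_subset ⟨huNR, v, hv, huv.symm⟩) hu
  exact mem_reach_of_adj hu (prGraph_adj_of_adj huv (fun h => huNR h.1) fun h => hvNR h.1) hvJ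

lemma IsSeparator.of_prGraph (hJ : IsSeparator (PrGraph G X Y K₁) X Y J) (hX : X.Nonempty)
    (hK₁ : IsSeparator G X Y K₁) : IsSeparator G X Y J :=
  .of_disjoint_reach hJ.1 (hJ.disjoint_reach.mono_right (reach_subset_reach_prGraph hX hK₁ hJ))

lemma reach_prGraph_subset (hK : IsSeparator G X Y K) (hK₁K : Disjoint K₁ (Reach G Y K)) :
    Reach (PrGraph G X Y K₁) Y K ⊆ Reach G Y K := by
  refine reach_subset_of_closed (fun y hy hyK => mem_reach_of_mem hy hyK)
    fun u v _ hu huv hvK => ?_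
  rcases huv.2.2.2 with huv | ⟨huX, -⟩ | ⟨huK₁, -⟩
  · exact mem_reach_of_adj hu huv hvK
  · exact absurd hu (Set.disjoint_left.1 hK.disjoint_reach huX)
  · exact absurd hu (Set.disjoint_left.1 hK₁K huK₁)

lemma IsSeparator.prGraph (hK : IsSeparator G X Y K) (hK₁K : Disjoint K₁ (Reach G Y K)) :
    IsSeparator (PrGraph G X Y K₁) X Y K :=
  .of_disjoint_reach hK.1 (hK.disjoint_reach.mono_right (reach_prGraph_subset hK hK₁K))

lemma reach_prGraph_eq (hX : X.Nonempty) (hK₁ : IsSeparator G X Y K₁)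
    (hJ : IsSeparator (PrGraph G X Y K₁) X Y J) : Reach (PrGraph G X Y K₁) Y J = Reach G Y J :=
  have hsub := reach_subset_reach_prGraph hX hK₁ hJ
  (reach_prGraph_subset (hJ.of_prGraph hX hK₁)
    ((disjoint_reach_prGraph hX hK₁ hJ).mono_right hsub)).antisymm hsub

lemma NR_prGraph_eq (hX : X.Nonempty) (hK₁ : IsSeparator G X Y K₁)
    (hJ : IsSeparator (PrGraph G X Y K₁) X Y J) : NR (PrGraph G X Y K₁) Y J = NR G Y J := by
  ext v
  rw [mem_NR, mem_NR, reach_prGraph_eq hX hK₁ hJ]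

lemma nset_prGraph (hX : X.Nonempty) (hK₁ : IsSeparator G X Y K₁) :
    NSet (PrGraph G X Y K₁) X = K₁ := by
  ext v
  constructor
  · rintro ⟨hvX, x, hx, hxv⟩
    rcases hxv.2.2.2 with hxv' | ⟨-, hv⟩ | ⟨hxK₁, -⟩
    · by_contra hvK₁
      exact hxv.2.2.1 ⟨hK₁.nset_diff_subset_NR ⟨⟨hvX, x, hx, hxv'⟩, hvK₁⟩, hvX⟩
    · exact hv
    · exact absurd hx (Set.disjoint_left.1 hK₁.disjoint_left hxK₁)
  · intro hv
    obtain ⟨x, hx⟩ := hX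
    have hvX := Set.disjoint_left.1 hK₁.disjoint_left hv
    exact ⟨hvX, x, hx, prGraph_adj_of_mem hx ⟨hv, hvX⟩⟩

lemma IsMinimalSeparator.disjoint_reach_of_sepLE (hK₁ : IsMinimalSeparator G X Y K₁)
    (hle : SepLE G Y K₁ K) : Disjoint K₁ (Reach G Y K) := by
  refine Set.disjoint_left.2 fun k hk hkR => ?_
  obtain ⟨u, hu, huk⟩ := hK₁.exists_adj_mem_reach hk
  exact not_adj_of_mem_reach_of_mem_NR hkR (hle (hK₁.1.reach_subset_NR hu)) huk.symm

lemma sepLE_of_isMinimalSeparator_prGraph (hX : X.Nonempty) (hK₁ : IsSeparator G X Y K₁)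
    (hJ : IsMinimalSeparator (PrGraph G X Y K₁) X Y J) : SepLE G Y K₁ J := by
  intro v hv
  by_cases hvX : v ∈ X
  · exact (hJ.1.of_prGraph hX hK₁).subset_NR hvX
  refine ⟨fun hvJ => ?_, fun (hvR : v ∈ Reach G Y J) => ?_⟩
  · obtain ⟨u, hvu⟩ := hJ.exists_adj hvJ
    exact hvu.2.1 ⟨hv, hvX⟩
  · have hvY : v ∉ Y := fun hvY => Set.disjoint_left.1 hK₁.disjoint_NR hvY hv
    rw [← reach_prGraph_eq hX hK₁ hJ.1] at hvR
    exact notMem_NR_diff_of_mem_reach_prGraph hvR hvY ⟨hv, hvX⟩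

lemma Normalized.prGraph [Finite V] (hX : X.Nonempty) (hK₁ : IsImportantSeparator G X Y K₁) :
    Normalized (PrGraph G X Y K₁) X Y := by
  have hK₁' := hK₁.1.1
  rw [Normalized, nset_prGraph hX hK₁']
  refine ⟨hK₁'.prGraph (Set.disjoint_left.2 fun _ hk hkR => notMem_of_mem_reach hkR hk),
    fun J hJ hne => ?_⟩
  obtain ⟨Jm, hJmJ, hJm⟩ := exists_isMinimalSeparator_subset hJ
  by_cases heq : NR G Y K₁ = NR G Y Jm
  · exact Set.ncard_lt_ncard (((hK₁.1.subset_of_NR_eq heq).trans hJmJ).ssubset_of_ne hne.symm)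
  · have hle := sepLE_of_isMinimalSeparator_prGraph hX hK₁' hJm
    have : K₁.ncard < Jm.ncard :=
      not_le.1 fun hcard => hK₁.2 ⟨Jm, hJm.1.of_prGraph hX hK₁', ⟨hle, heq⟩, hcard⟩
    exact this.trans_le (Set.ncard_le_ncard hJmJ)

lemma minSepSize_prGraph [Finite V] (hX : X.Nonempty) (hK₁ : IsImportantSeparator G X Y K₁) :
    minSepSize (PrGraph G X Y K₁) X Y = K₁.ncard := by
  rw [(Normalized.prGraph hX hK₁).minSepSize_eq, nset_prGraph hX hK₁.1.1]

lemma IsImportantSeparator.prGraph (hX : X.Nonempty) (hK₁ : IsMinimalSeparator G X Y K₁)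
    (hK : IsImportantSeparator G X Y K) (hle : SepLE G Y K₁ K) :
    IsImportantSeparator (PrGraph G X Y K₁) X Y K := by
  have hK' := hK.1.1.prGraph (hK₁.disjoint_reach_of_sepLE hle)
  refine ⟨⟨hK', fun J hJK hJ => hK.1.2 J hJK (hJ.of_prGraph hX hK₁.1)⟩,
    fun ⟨J, hJ, hlt, hcard⟩ => hK.2 ⟨J, hJ.of_prGraph hX hK₁.1, ?_, hcard⟩⟩
  rwa [SepLT, NR_prGraph_eq hX hK₁.1 hK', NR_prGraph_eq hX hK₁.1 hJ] at hlt

lemma reach_prGraph_subset_reach (hK₁ : IsMinimalSeparator G X Y K₁) (hK : IsSeparator G X Y K)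
    (hle : SepLE G Y K₁ K) : Reach (PrGraph G X Y K₁) X K ⊆ Reach G X K := by
  have hreach : Reach G X K₁ ⊆ Reach G X K := by
    refine reach_subset_of_closed
      (fun x hx _ => mem_reach_of_mem hx (Set.disjoint_right.1 hK.disjoint_left hx))
      fun u v hu₁ hu huv hvK₁ => mem_reach_of_adj hu huv ?_
    exact Set.disjoint_left.1 disjoint_NR
      (hle (hK₁.1.reach_subset_NR (mem_reach_of_adj hu₁ huv hvK₁)))
  refine reach_subset_of_closed (fun x hx hxK => mem_reach_of_mem hx hxK)
    fun u v _ hu huv hvK => ?_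
  rcases huv.2.2.2 with huv | ⟨-, hvK₁⟩ | ⟨-, hvX⟩
  · exact mem_reach_of_adj hu huv hvK
  · obtain ⟨w, hw, hwv⟩ := hK₁.exists_adj_mem_reach hvK₁
    exact mem_reach_of_adj (hreach hw) hwv hvK
  · exact mem_reach_of_mem hvX hvK

lemma disjoint_nset_of_subset_reach_prGraph (hK₁ : IsSeparator G X Y K₁)
    (hK₁P : Disjoint K₁ (NSet G X \ K)) (hS : S ⊆ Reach (PrGraph G X Y K₁) X K) :
    Disjoint S (NSet G X) := by
  refine Set.disjoint_left.2 fun v hvS hvN => ?_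
  have hvR := hS hvS
  have hvK₁ : v ∈ K₁ := by
    by_contra h
    exact notMem_NR_diff_of_mem_reach_prGraph hvR hvN.1
      ⟨hK₁.nset_diff_subset_NR ⟨hvN, h⟩, hvN.1⟩
  exact Set.disjoint_left.1 hK₁P hvK₁ ⟨hvN, notMem_of_mem_reach hvR⟩

end PrGraph

section CompoundWitness

variable {G : SimpleGraph V} {X Y K K₁ S₁ : Set V} {attr : List (Set V)}

lemma exists_first_attribute [Finite V] (hnorm : Normalized G X Y)
    (hK : IsImportantSeparator G X Y K) (hKne : K ≠ NSet G X) :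
    ∃ S₁ K₁, S₁.Nonempty ∧ S₁ ⊆ NSet G X \ K ∧ S₁.ncard ≤ excess G X Y K₁ ∧
      IsImportantWitness G X Y S₁ K₁ ∧ Disjoint K₁ (NSet G X \ K) ∧ SepLE G Y K₁ K := by
  have hPN : NSet G X \ K ⊆ NSet G X := Set.sdiff_subset
  have hKP : Disjoint K (NSet G X \ K) := Set.disjoint_sdiff_right
  have hP : (NSet G X \ K).Nonempty := by
    refine Set.sdiff_nonempty.2 fun hsub => ?_
    rcases hsub.eq_or_ssubset with h | h
    exacts [hKne h.symm, hK.1.2 _ h hnorm.1]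
  obtain ⟨S₁, hS₁P, hcard, hCE⟩ := exists_subset_ncard_le_CE_eq hPN hK.1.1 hKP
  have hS₁N := hS₁P.trans hPN
  have hKS₁ := hKP.mono_right hS₁P
  obtain ⟨K₁, hK₁, hmax⟩ := exists_greatest_isWitness hS₁N hK.1.1 hKS₁
  have hS₁ : S₁.Nonempty := by
    refine Set.nonempty_iff_ne_empty.2 fun h => ?_
    have := hnorm.CE_pos hP hPN hK.1.1 hKP
    rw [← hCE, h, hnorm.CE_empty] at this
    exact lt_irrefl 0 this
  exact ⟨S₁, K₁, hS₁, hS₁P, hK₁.2.2 ▸ hcard,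
    ⟨hK₁, hK₁.isImportantSeparator_of_greatest hS₁N hmax⟩,
    disjoint_of_greatest_isWitness hPN hS₁P hCE hK.1.1 hKP hmax,
    hK.sepLE_of_isWitness hS₁N hKS₁ hK₁⟩

/-- `subset_reach` is the invariant that shows, one level up, that the later sets of an attribute
avoid `N(X)`. -/
structure IsBoundedAttribute (G : SimpleGraph V) (X Y K : Set V) (attr : List (Set V)) :
    Prop where
  pairwise_disjoint : attr.Pairwise Disjoint
  nonempty : ∀ S ∈ attr, S.Nonempty
  isCompoundWitness : IsCompoundWitness X Y G attr K
  rank_le : (attr.map Set.ncard).sum ≤ excess G X Y K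
  subset_reach : ∀ S ∈ attr, S ⊆ Reach G X K

lemma IsCompoundWitness.ne_nil (h : IsCompoundWitness X Y G attr K) :
    attr ≠ [] := by
  cases h <;> simp

lemma isBoundedAttribute_singleton (hS₁ : S₁.Nonempty) (hS₁K : S₁ ⊆ NSet G X \ K)
    (hcard : S₁.ncard ≤ excess G X Y K) (hK : IsImportantWitness G X Y S₁ K) :
    IsBoundedAttribute G X Y K [S₁] where
  pairwise_disjoint := List.pairwise_singleton _ _
  nonempty := by simpa using hS₁
  isCompoundWitness := .base G S₁ K hS₁ (fun _ hs => (hS₁K hs).1)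
    (fun _ hs _ hy => hK.1.1.not_adj (hS₁K hs) hy) hK
  rank_le := by simpa using hcard
  subset_reach := by simpa using hS₁K.trans hK.1.1.nset_diff_subset_reach

lemma IsBoundedAttribute.cons [Finite V] (hS₁ : S₁.Nonempty) (hS₁K : S₁ ⊆ NSet G X \ K)
    (hcard : S₁.ncard ≤ excess G X Y K₁)
    (hK₁ : IsImportantWitness G X Y S₁ K₁) (hK₁P : Disjoint K₁ (NSet G X \ K))
    (hK : IsSeparator G X Y K) (hle : SepLE G Y K₁ K)
    (h : IsBoundedAttribute (PrGraph G X Y K₁) X Y K attr) :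
    IsBoundedAttribute G X Y K (S₁ :: attr) := by
  have hX : X.Nonempty := hS₁.elim fun _ hs => nonempty_of_mem_nset (hS₁K hs).1
  have hdisj : ∀ S ∈ attr, Disjoint S (NSet G X) := fun S hS =>
    disjoint_nset_of_subset_reach_prGraph hK₁.1.1 hK₁P (h.subset_reach S hS)
  have hrank := h.rank_le
  rw [excess, minSepSize_prGraph hX hK₁.2] at hrank
  have := CE_le_excess hK (Set.disjoint_left.2 fun v hvK hvS => (hS₁K hvS).2 hvK)
  have := minSepSize_le hK₁.1.1
  have := hK₁.1.2.2
  refine ⟨?_, ?_, ?_, ?_, ?_⟩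
  · exact List.pairwise_cons.2 ⟨fun S hS =>
      ((hdisj S hS).mono_right (hS₁K.trans Set.sdiff_subset)).symm, h.pairwise_disjoint⟩
  · simpa using ⟨hS₁, h.nonempty⟩
  · exact .step G S₁ attr K K₁ hS₁ (fun _ hs => (hS₁K hs).1)
      (fun _ hs _ hy => hK.not_adj (hS₁K hs) hy) h.isCompoundWitness.ne_nil hdisj hK₁
      h.isCompoundWitness
  · simp only [List.map_cons, List.sum_cons]
    unfold excess at *
    omega
  · simpa using ⟨hS₁K.trans hK.nset_diff_subset_reach, fun S hS =>
      (h.subset_reach S hS).trans (reach_prGraph_subset_reach hK₁.2.1 hK hle)⟩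

theorem exists_isBoundedAttribute [Finite V] (hnorm : Normalized G X Y)
    (hK : IsImportantSeparator G X Y K) (hKne : K ≠ NSet G X) :
    ∃ attr, IsBoundedAttribute G X Y K attr := by
  induction hn : excess G X Y K using Nat.strong_induction_on generalizing G with
  | _ n ih =>
  obtain ⟨S₁, K₁, hS₁, hS₁K, hcard, hK₁, hK₁P, hle⟩ :=
    exists_first_attribute hnorm hK hKne
  by_cases heq : NR G Y K₁ = NR G Y K
  · obtain rfl := hK₁.2.1.eq_of_NR_eq hK.1 heq
    exact ⟨_, isBoundedAttribute_singleton hS₁ hS₁K hcard hK₁⟩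
  have hX : X.Nonempty := hS₁.elim fun _ hs => nonempty_of_mem_nset (hS₁K hs).1
  have hK₁ne : K₁ ≠ NSet G X := by
    rintro rfl
    obtain ⟨s, hs⟩ := hS₁
    exact Set.disjoint_left.1 hK₁.1.2.1 (hS₁K hs).1 hs
  have hlt : excess (PrGraph G X Y K₁) X Y K < n := by
    have := hnorm.minSepSize_lt hK₁.1.1 hK₁ne
    have := hnorm.minSepSize_lt hK.1.1 hKne
    rw [← hn, excess, excess, minSepSize_prGraph hX hK₁.2]
    omega
  have hKne' : K ≠ NSet (PrGraph G X Y K₁) X := by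
    rw [nset_prGraph hX hK₁.1.1]
    rintro rfl
    exact heq rfl
  obtain ⟨attr, hattr⟩ :=
    ih _ hlt (Normalized.prGraph hX hK₁.2) (hK.prGraph hX hK₁.2.1 hle) hKne' rfl
  exact ⟨_, hattr.cons hS₁ hS₁K hcard hK₁ hK₁P hK.1.1 hle⟩

end CompoundWitness

theorem important_separator_is_compoundWitness_general
    {V : Type*} [Fintype V] (G : SimpleGraph V) (X Y K : Set V)
    (hnorm : Normalized G X Y)
    (hK : IsImportantSeparator G X Y K) (hKne : K ≠ NSet G X) :
    ∃ attr : List (Set V),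
      attr.Pairwise (fun A B => Disjoint A B) ∧
      (∀ S ∈ attr, S.Nonempty) ∧
      IsCompoundWitness X Y G attr K ∧
      (attr.map Set.ncard).sum ≤ excess G X Y K := by
  obtain ⟨attr, h⟩ := exists_isBoundedAttribute hnorm hK hKne
  exact ⟨attr, h.pairwise_disjoint, h.nonempty, h.isCompoundWitness, h.rank_le⟩

/-- Let `G` be an `X`–`Y` normalized graph and `K ≠ N(X)` an
important `X`–`Y` separator of `G`.  Then `K` is a compound witness w.r.t.
`X`, `Y` in `G` of rank at most `excess(K)`. -/
theorem important_separator_is_compoundWitness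
    {V : Type*} [Fintype V] (G : SimpleGraph V) (X Y K : Set V)
    (hXY : Disjoint X Y) (hnorm : Normalized G X Y)
    (hK : IsImportantSeparator G X Y K) (hKne : K ≠ NSet G X) :
    ∃ attr : List (Set V),
      attr.Pairwise (fun A B => Disjoint A B) ∧
      (∀ S ∈ attr, S.Nonempty) ∧
      IsCompoundWitness X Y G attr K ∧
      (attr.map Set.ncard).sum ≤ excess G X Y K :=
  important_separator_is_compoundWitness_general G X Y K hnorm hK hKne
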